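/- Let (A_i)_{i=1}^n be a Kraus representation of minimal length of a channel A (so the A_i are linearly independent), and let (B_i)_{i=1}^m and (B'_j)_{j=1}^{m'} (m,m' ≥ n) be Kraus representations of a channel B. Then the controlled channels with Kraus operators ( |0⟩⟨0|⊗A_i + |1⟩⟨1|⊗B_i for i≤n, together with |1⟩⟨1|⊗B_i for i>n ) and the analogous family with the B'_j coincide if and only if B_i = B'_i for all i ≤ n. -/

import Mathlib

open Matrix Kronecker

noncomputable section

/-- The Kraus family of a controlled version of channels `A` (of minimal length `n`)
and `B` (of length `m ≥ n`): `|0⟩⟨0| ⊗ A i + |1⟩⟨1| ⊗ B i` for `i < n`, and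
`|1⟩⟨1| ⊗ B i` for `i ≥ n`. -/
def ctrlPairKraus {dIn dOut n m : ℕ}
    (A : Fin n → Matrix (Fin dOut) (Fin dIn) ℂ)
    (B : Fin m → Matrix (Fin dOut) (Fin dIn) ℂ) (i : Fin m) :
    Matrix (Fin 2 × Fin dOut) (Fin 2 × Fin dIn) ℂ :=
  (if h : (i : ℕ) < n then
      Matrix.single (0 : Fin 2) 0 (1:ℂ) ⊗ₖ A ⟨i, h⟩ else 0)
    + Matrix.single (1 : Fin 2) 1 (1:ℂ) ⊗ₖ B i

lemma kron_conjTranspose {l m n p : Type*} (A : Matrix l m ℂ) (B : Matrix n p ℂ) :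
    (A ⊗ₖ B)ᴴ = Aᴴ ⊗ₖ Bᴴ := by
  ext ⟨i,j⟩ ⟨k,l⟩
  simp [conjTranspose_apply, kroneckerMap_apply]

lemma kron_sum {l m n p : Type*} {ι : Type*} (s : Finset ι) (A : Matrix l m ℂ)
    (B : ι → Matrix n p ℂ) : A ⊗ₖ (∑ i ∈ s, B i) = ∑ i ∈ s, A ⊗ₖ B i := by
  ext ⟨i,j⟩ ⟨k,l⟩
  simp [kroneckerMap_apply, Finset.mul_sum, Matrix.sum_apply]

lemma sandwich {dOut dIn : ℕ} (B : Matrix (Fin dOut) (Fin dIn) ℂ)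
    (C : Matrix (Fin dIn) (Fin dOut) ℂ)
    (ρ : Matrix (Fin 2 × Fin dIn) (Fin 2 × Fin dIn) ℂ) :
    (Matrix.single (1 : Fin 2) (1 : Fin 2) (1:ℂ) ⊗ₖ B) * ρ *
      (Matrix.single (1 : Fin 2) (1 : Fin 2) (1:ℂ) ⊗ₖ C)
    = Matrix.single (1 : Fin 2) (1 : Fin 2) (1:ℂ) ⊗ₖ
        (B * ρ.submatrix (Prod.mk 1) (Prod.mk 1) * C) := by
  ext ⟨s,p⟩ ⟨t,q⟩
  simp only [mul_apply, kroneckerMap_apply, Fintype.sum_prod_type, single,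
    of_apply, submatrix_apply]
  by_cases hs : s = 1 <;> by_cases ht : t = 1 <;>
    simp [hs, ht, Fin.sum_univ_two, Finset.mul_sum, Finset.sum_mul, mul_comm,
      mul_left_comm, mul_assoc, ite_and]

lemma sum_dite_lt {M : Type*} [AddCommMonoid M] {n m : ℕ} (hn : n ≤ m) (g : Fin n → M) :
    ∑ i : Fin m, (if h : (i : ℕ) < n then g ⟨i, h⟩ else 0) = ∑ i : Fin n, g i := by
  have hf : ∀ k : Fin n,
      g k = (fun i : ℕ => if h : i < n then g ⟨i, h⟩ else 0) (k : ℕ) := by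
    intro k; simp [k.isLt]
  rw [Fin.sum_univ_eq_sum_range (fun i : ℕ => if h : i < n then g ⟨i, h⟩ else 0)]
  conv_rhs => rw [Finset.sum_congr rfl (fun k _ => hf k)]
  rw [Fin.sum_univ_eq_sum_range (fun i : ℕ => if h : i < n then g ⟨i, h⟩ else 0)]
  exact (Finset.sum_subset (Finset.range_subset_range.2 hn) (by
    intro x hx hnx
    simp only [Finset.mem_range] at hnx
    simp [hnx])).symm

lemma stdE_conjT {a b : Fin 2} :
    (Matrix.single a b (1:ℂ))ᴴ = Matrix.single b a (1:ℂ) := by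
  ext i j
  simp only [conjTranspose_apply, single, of_apply]
  by_cases h1 : a = j <;> by_cases h2 : b = i <;> simp [h1, h2]

lemma key {dIn dOut n m : ℕ} (hn : n ≤ m)
    (A : Fin n → Matrix (Fin dOut) (Fin dIn) ℂ)
    (B : Fin m → Matrix (Fin dOut) (Fin dIn) ℂ)
    (ρ : Matrix (Fin 2 × Fin dIn) (Fin 2 × Fin dIn) ℂ) :
    ∑ i, ctrlPairKraus A B i * ρ * (ctrlPairKraus A B i)ᴴ
    = (∑ i : Fin n,
        ((Matrix.single (0:Fin 2) (0:Fin 2) (1:ℂ) ⊗ₖ A i) * ρ *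
           (Matrix.single (0:Fin 2) (0:Fin 2) (1:ℂ) ⊗ₖ (A i)ᴴ)
         + (Matrix.single (0:Fin 2) (0:Fin 2) (1:ℂ) ⊗ₖ A i) * ρ *
           (Matrix.single (1:Fin 2) (1:Fin 2) (1:ℂ) ⊗ₖ (B (Fin.castLE hn i))ᴴ)
         + (Matrix.single (1:Fin 2) (1:Fin 2) (1:ℂ) ⊗ₖ B (Fin.castLE hn i)) * ρ *
           (Matrix.single (0:Fin 2) (0:Fin 2) (1:ℂ) ⊗ₖ (A i)ᴴ)))
      + Matrix.single (1:Fin 2) (1:Fin 2) (1:ℂ) ⊗ₖ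
          (∑ i, B i * ρ.submatrix (Prod.mk 1) (Prod.mk 1) * (B i)ᴴ) := by
  have hsplit : ∀ i : Fin m, ctrlPairKraus A B i * ρ * (ctrlPairKraus A B i)ᴴ
      = (if h : (i : ℕ) < n then
          (((Matrix.single (0:Fin 2) (0:Fin 2) (1:ℂ) ⊗ₖ A ⟨i,h⟩) * ρ *
             (Matrix.single (0:Fin 2) (0:Fin 2) (1:ℂ) ⊗ₖ (A ⟨i,h⟩)ᴴ)
           + (Matrix.single (0:Fin 2) (0:Fin 2) (1:ℂ) ⊗ₖ A ⟨i,h⟩) * ρ *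
             (Matrix.single (1:Fin 2) (1:Fin 2) (1:ℂ) ⊗ₖ (B (Fin.castLE hn ⟨i,h⟩))ᴴ)
           + (Matrix.single (1:Fin 2) (1:Fin 2) (1:ℂ) ⊗ₖ B (Fin.castLE hn ⟨i,h⟩)) * ρ *
             (Matrix.single (0:Fin 2) (0:Fin 2) (1:ℂ) ⊗ₖ (A ⟨i,h⟩)ᴴ)))
          else 0)
        + Matrix.single (1:Fin 2) (1:Fin 2) (1:ℂ) ⊗ₖ
            (B i * ρ.submatrix (Prod.mk 1) (Prod.mk 1) * (B i)ᴴ) := by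
    intro i
    rw [ctrlPairKraus]
    split
    case isTrue h =>
      have hcast : Fin.castLE hn ⟨(i:ℕ), h⟩ = i := rfl
      rw [hcast, conjTranspose_add, kron_conjTranspose, kron_conjTranspose,
        stdE_conjT, stdE_conjT, ← sandwich]
      simp only [Matrix.add_mul, Matrix.mul_add]; abel

    case isFalse h =>
      simp only [zero_add]
      rw [kron_conjTranspose, stdE_conjT, sandwich]
  rw [Finset.sum_congr rfl (fun i _ => hsplit i), Finset.sum_add_distrib,
    sum_dite_lt hn (fun j : Fin n =>
      (Matrix.single (0:Fin 2) (0:Fin 2) (1:ℂ) ⊗ₖ A j) * ρ *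
           (Matrix.single (0:Fin 2) (0:Fin 2) (1:ℂ) ⊗ₖ (A j)ᴴ)
         + (Matrix.single (0:Fin 2) (0:Fin 2) (1:ℂ) ⊗ₖ A j) * ρ *
           (Matrix.single (1:Fin 2) (1:Fin 2) (1:ℂ) ⊗ₖ (B (Fin.castLE hn j))ᴴ)
         + (Matrix.single (1:Fin 2) (1:Fin 2) (1:ℂ) ⊗ₖ B (Fin.castLE hn j)) * ρ *
           (Matrix.single (0:Fin 2) (0:Fin 2) (1:ℂ) ⊗ₖ (A j)ᴴ)), kron_sum]

lemma mul_std_mul_conjT_apply {a b : ℕ} (A : Matrix (Fin a) (Fin b) ℂ)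
    (B : Matrix (Fin a) (Fin b) ℂ) (u v : Fin b) (p q : Fin a) :
    (A * Matrix.single u v (1:ℂ) * Bᴴ) p q = A p u * star (B q v) := by
  simp [Matrix.mul_apply, Matrix.single, conjTranspose_apply, Finset.sum_ite,
    ite_and, mul_comm]


/-- with `(A i)` a minimal-length (linearly independent) Kraus
representation of `𝒜`, and `(B i)`, `(B' j)` Kraus representations of the same
channel `ℬ`, the two controlled channels coincide iff `B i = B' i` for all `i < n`. -/
theorem ctrl_two_channels_param {dIn dOut n m m' : ℕ}
    (hn : n ≤ m) (hn' : n ≤ m')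
    (A : Fin n → Matrix (Fin dOut) (Fin dIn) ℂ)
    (hAindep : LinearIndependent ℂ A)
    (hA : ∑ i, (A i)ᴴ * A i = 1)
    (B : Fin m → Matrix (Fin dOut) (Fin dIn) ℂ)
    (B' : Fin m' → Matrix (Fin dOut) (Fin dIn) ℂ)
    (hB : ∑ i, (B i)ᴴ * B i = 1)
    (hB' : ∑ j, (B' j)ᴴ * B' j = 1)
    (hBsame : ∀ ρ : Matrix (Fin dIn) (Fin dIn) ℂ,
      ∑ i, B i * ρ * (B i)ᴴ = ∑ j, B' j * ρ * (B' j)ᴴ) :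
    ((∀ ρ : Matrix (Fin 2 × Fin dIn) (Fin 2 × Fin dIn) ℂ,
        ∑ i, ctrlPairKraus A B i * ρ * (ctrlPairKraus A B i)ᴴ
          = ∑ j, ctrlPairKraus A B' j * ρ * (ctrlPairKraus A B' j)ᴴ)
      ↔ ∀ i : Fin n, B (Fin.castLE hn i) = B' (Fin.castLE hn' i)) := by
  have hE0001 : Matrix.single (0:Fin 2) (0:Fin 2) (1:ℂ) *
      Matrix.single (0:Fin 2) (1:Fin 2) (1:ℂ)
      = Matrix.single (0:Fin 2) (1:Fin 2) (1:ℂ) := by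
    rw [Matrix.single_mul_single_same, one_mul]
  have hE0100 : Matrix.single (0:Fin 2) (1:Fin 2) (1:ℂ) *
      Matrix.single (0:Fin 2) (0:Fin 2) (1:ℂ) = 0 := by
    apply Matrix.single_mul_single_of_ne; decide
  have hE1101 : Matrix.single (1:Fin 2) (1:Fin 2) (1:ℂ) *
      Matrix.single (0:Fin 2) (1:Fin 2) (1:ℂ) = 0 := by
    apply Matrix.single_mul_single_of_ne; decide
  have hE0111 : Matrix.single (0:Fin 2) (1:Fin 2) (1:ℂ) *
      Matrix.single (1:Fin 2) (1:Fin 2) (1:ℂ)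
      = Matrix.single (0:Fin 2) (1:Fin 2) (1:ℂ) := by
    rw [Matrix.single_mul_single_same, one_mul]
  constructor
  · intro hEq
    have hAX : ∀ X : Matrix (Fin dIn) (Fin dIn) ℂ, ∀ p q,
        ∑ i : Fin n, (A i * X * (B (Fin.castLE hn i))ᴴ) p q
          = ∑ i : Fin n, (A i * X * (B' (Fin.castLE hn' i))ᴴ) p q := by
      intro X p q
      have hterm : ∀ C : Matrix (Fin dOut) (Fin dIn) ℂ, ∀ i : Fin n,
          (Matrix.single (0:Fin 2) (0:Fin 2) (1:ℂ) ⊗ₖ A i) *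
            (Matrix.single (0:Fin 2) (1:Fin 2) (1:ℂ) ⊗ₖ X) *
            (Matrix.single (0:Fin 2) (0:Fin 2) (1:ℂ) ⊗ₖ (A i)ᴴ)
          + (Matrix.single (0:Fin 2) (0:Fin 2) (1:ℂ) ⊗ₖ A i) *
            (Matrix.single (0:Fin 2) (1:Fin 2) (1:ℂ) ⊗ₖ X) *
            (Matrix.single (1:Fin 2) (1:Fin 2) (1:ℂ) ⊗ₖ Cᴴ)
          + (Matrix.single (1:Fin 2) (1:Fin 2) (1:ℂ) ⊗ₖ C) *
            (Matrix.single (0:Fin 2) (1:Fin 2) (1:ℂ) ⊗ₖ X) *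
            (Matrix.single (0:Fin 2) (0:Fin 2) (1:ℂ) ⊗ₖ (A i)ᴴ)
          = Matrix.single (0:Fin 2) (1:Fin 2) (1:ℂ) ⊗ₖ (A i * X * Cᴴ) := by
        intro C i
        rw [← Matrix.mul_kronecker_mul, ← Matrix.mul_kronecker_mul, ← Matrix.mul_kronecker_mul,
          ← Matrix.mul_kronecker_mul, ← Matrix.mul_kronecker_mul,
          hE0001, hE0100, hE1101, hE0111]
        simp [Matrix.zero_kronecker, Matrix.zero_mul, Matrix.mul_assoc]
      have h := hEq (Matrix.single (0:Fin 2) (1:Fin 2) (1:ℂ) ⊗ₖ X)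
      have hsub : (Matrix.single (0:Fin 2) (1:Fin 2) (1:ℂ) ⊗ₖ X).submatrix
          (Prod.mk (1 : Fin 2)) (Prod.mk (1 : Fin 2)) = 0 := by
        ext p' q'
        simp [Matrix.kroneckerMap_apply, Matrix.single]
      rw [key hn A B, key hn' A B', hsub] at h
      simp only [Matrix.mul_zero, Matrix.zero_mul, Finset.sum_const_zero,
        Matrix.kronecker_zero, add_zero] at h
      have h2 := ((Finset.sum_congr rfl
          (fun i _ => (hterm (B (Fin.castLE hn i)) i).symm)).trans h).trans
        (Finset.sum_congr rfl (fun i _ => hterm (B' (Fin.castLE hn' i)) i))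
      have h3 := congrFun (congrFun h2 ((0:Fin 2), p)) ((1:Fin 2), q)
      simpa [Matrix.sum_apply, Matrix.kroneckerMap_apply, Matrix.single] using h3
    intro i
    ext q v
    have hzero : ∑ j : Fin n, (star ((B (Fin.castLE hn j)) q v)
        - star ((B' (Fin.castLE hn' j)) q v)) • A j = 0 := by
      ext p u
      have h4 := hAX (Matrix.single u v (1:ℂ)) p q
      simp only [mul_std_mul_conjT_apply] at h4
      simp only [Matrix.sum_apply, Matrix.smul_apply, smul_eq_mul, Matrix.zero_apply,
        sub_mul]
      rw [Finset.sum_sub_distrib, sub_eq_zero]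
      calc ∑ j : Fin n, star (B (Fin.castLE hn j) q v) * A j p u
          = ∑ j : Fin n, A j p u * star (B (Fin.castLE hn j) q v) := by
            simp [mul_comm]
        _ = ∑ j : Fin n, A j p u * star (B' (Fin.castLE hn' j) q v) := h4
        _ = ∑ j : Fin n, star (B' (Fin.castLE hn' j) q v) * A j p u := by
            simp [mul_comm]
    have h5 := sub_eq_zero.1 (Fintype.linearIndependent_iff.1 hAindep _ hzero i)
    exact star_injective h5
  · intro hBB ρ
    rw [key hn A B, key hn' A B', hBsame]
    congr 1
    apply Finset.sum_congr rfl
    intro i _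
    rw [hBB i]
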